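/- arXiv:2011.09973 — 2 statements merged into one kernel-verified Lean document; each statement's English description precedes it below -/
import Mathlib

section
/- Suppose assumption (A) holds, w ∈ ℝ^n is saturated with β := ‖w_T‖₁ > 0 and ‖w_S‖₁ > 0, and let k ∈ ℕ satisfy k ≥ 4/α. Let V ∈ ℝ^{d×k} have orthonormal columns, and set Σ := Vᵀ·Cov_w(T)·V ∈ ℝ^{k×k}. Assume Σ is positive definite with smallest eigenvalue λ_min(Σ) ≥ 4/√β. Define scores τ_i := (X_i − μ_w(T))ᵀ·V·Σ^{−1}·Vᵀ·(X_i − μ_w(T)) for i ∈ {1,…,n}. Then ∑_{i∈S} (w_i/‖w_S‖₁)·τ_i ≤ k/2 and ∑_{i∈T} (w_i/‖w_T‖₁)·τ_i = k; in particular τ is safe with respect to w. -/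
open Finset Matrix

/-- Total weight of `w` on a finite index set `T'`: `‖w_{T'}‖₁ = ∑_{i ∈ T'} w_i`. -/
def wsum {n : ℕ} (w : Fin n → ℝ) (T' : Finset (Fin n)) : ℝ := ∑ i ∈ T', w i

/-- Weighted empirical mean `μ_w(T') = ∑_{i∈T'} (w_i/‖w_{T'}‖₁)·X_i`. -/
noncomputable def wmean {d n : ℕ} (X : Fin n → Fin d → ℝ) (w : Fin n → ℝ) (T' : Finset (Fin n)) :
    Fin d → ℝ :=
  ∑ i ∈ T', (w i / wsum w T') • X i

/-- Weighted empirical covariance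
`Cov_w(T') = ∑_{i∈T'} (w_i/‖w_{T'}‖₁)·(X_i − μ_w(T'))(X_i − μ_w(T'))ᵀ`. -/
noncomputable def wcov {d n : ℕ} (X : Fin n → Fin d → ℝ) (w : Fin n → ℝ) (T' : Finset (Fin n)) :
    Matrix (Fin d) (Fin d) ℝ :=
  ∑ i ∈ T', (w i / wsum w T') • Matrix.vecMulVec (X i - wmean X w T') (X i - wmean X w T')

/-- `w` is a saturated weight vector. -/
def Saturated {n : ℕ} (α : ℝ) (S : Finset (Fin n)) (w : Fin n → ℝ) : Prop :=
  (∀ i, 0 ≤ w i) ∧ (∑ i, w i) ≤ 1 ∧ (∀ i, w i ≤ 1 / n) ∧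
    α * Real.sqrt (wsum w Finset.univ) ≤ wsum w S

/-- Scores `τ` are safe with respect to `w`. -/
def Safe {n : ℕ} (S : Finset (Fin n)) (w τ : Fin n → ℝ) : Prop :=
  ∑ i ∈ S, (w i / wsum w S) * τ i ≤ (1 / 2) * ∑ i, (w i / wsum w Finset.univ) * τ i
section SiftAux

variable {m p n : ℕ}

lemma trace_mul_vecMulVec (P : Matrix (Fin m) (Fin m) ℝ) (x y : Fin m → ℝ) :
    (P * vecMulVec x y).trace = y ⬝ᵥ (P *ᵥ x) := by
  simp only [Matrix.trace, Matrix.diag, mul_apply, vecMulVec_apply, dotProduct, mulVec,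
    Finset.mul_sum]
  exact Finset.sum_congr rfl fun a _ => Finset.sum_congr rfl fun b _ => by ring

lemma qf_vecMulVec (x y v : Fin m → ℝ) :
    v ⬝ᵥ (vecMulVec x y *ᵥ v) = (x ⬝ᵥ v) * (y ⬝ᵥ v) := by
  simp only [dotProduct, mulVec, vecMulVec_apply, Finset.sum_mul, Finset.mul_sum]
  rw [Finset.sum_comm]
  exact Finset.sum_congr rfl fun a _ => Finset.sum_congr rfl fun b _ => by ring

lemma psd_trace_nonneg {P : Matrix (Fin m) (Fin m) ℝ} (hP : P.PosSemidef) : 0 ≤ P.trace := by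
  have h : ∀ a, 0 ≤ P a a := by
    intro a
    have := hP.dotProduct_mulVec_nonneg (Pi.single a 1)
    simpa [dotProduct, mulVec, Pi.single_apply, Finset.sum_ite_eq, Finset.mul_sum] using this
  exact Finset.sum_nonneg fun a _ => h a

lemma trace_mul_nonneg {P Q : Matrix (Fin m) (Fin m) ℝ}
    (hP : P.PosSemidef) (hQ : Q.PosSemidef) : 0 ≤ (P * Q).trace := by
  obtain ⟨B, hB⟩ : ∃ B : Matrix (Fin m) (Fin m) ℝ, Q = Bᴴ * B := by
    open scoped MatrixOrder in
    obtain ⟨X, hX, -, hXX⟩ := CFC.exists_sqrt_of_isSelfAdjoint_of_quasispectrumRestricts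
      hQ.isHermitian (QuasispectrumRestricts.nnreal_of_nonneg hQ.nonneg)
    exact ⟨X, by rw [← hXX]; congr 1; exact hX.symm⟩
  have h1 : (P * Q).trace = (B * P * Bᴴ).trace := by
    rw [hB, ← Matrix.mul_assoc, Matrix.trace_mul_cycle]
  rw [h1]
  exact psd_trace_nonneg (hP.mul_mul_conjTranspose_same B)

lemma psd_smul {P : Matrix (Fin m) (Fin m) ℝ} (hP : P.PosSemidef) {c : ℝ} (hc : 0 ≤ c) :
    (c • P).PosSemidef := by
  refine PosSemidef.of_dotProduct_mulVec_nonneg ?_ fun v => ?_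
  · show (c • P)ᴴ = c • P
    rw [conjTranspose_smul, hP.1]
    norm_num
  · rw [smul_mulVec, dotProduct_smul, smul_eq_mul]
    exact mul_nonneg hc (hP.dotProduct_mulVec_nonneg v)

lemma herm_sum_smul_vecMulVec (F : Finset (Fin n)) (q : Fin n → ℝ) (Y : Fin n → Fin m → ℝ) :
    (∑ i ∈ F, q i • vecMulVec (Y i) (Y i)).IsHermitian := by
  show _ = _
  ext a b
  simp only [conjTranspose_apply, Matrix.sum_apply, Matrix.smul_apply, vecMulVec_apply,
    smul_eq_mul, star_trivial]
  exact Finset.sum_congr rfl fun i _ => by ring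

lemma psd_vecMulVec (x : Fin m → ℝ) : (vecMulVec x x).PosSemidef := by
  refine PosSemidef.of_dotProduct_mulVec_nonneg ?_ fun v => ?_
  · show _ = _
    ext a b
    simp only [conjTranspose_apply, vecMulVec_apply, star_trivial]
    ring
  · rw [star_trivial, qf_vecMulVec]
    exact mul_self_nonneg _

lemma sum_mulVec' (F : Finset (Fin n)) (M : Fin n → Matrix (Fin m) (Fin m) ℝ) (v : Fin m → ℝ) :
    (∑ i ∈ F, M i) *ᵥ v = ∑ i ∈ F, (M i *ᵥ v) := by
  funext a
  simp only [mulVec, dotProduct, Matrix.sum_apply, Finset.sum_apply, Finset.sum_mul]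
  exact Finset.sum_comm

lemma dotProduct_sum' (v : Fin m → ℝ) (F : Finset (Fin n)) (f : Fin n → Fin m → ℝ) :
    v ⬝ᵥ (∑ i ∈ F, f i) = ∑ i ∈ F, v ⬝ᵥ f i := by
  simp only [dotProduct, Finset.sum_apply, Finset.mul_sum]
  exact Finset.sum_comm

lemma qf_sum (F : Finset (Fin n)) (q : Fin n → ℝ) (Y : Fin n → Fin m → ℝ) (v : Fin m → ℝ) :
    v ⬝ᵥ ((∑ i ∈ F, q i • vecMulVec (Y i) (Y i)) *ᵥ v) = ∑ i ∈ F, q i * (Y i ⬝ᵥ v) ^ 2 := by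
  rw [sum_mulVec', dotProduct_sum']
  refine Finset.sum_congr rfl fun i _ => ?_
  rw [smul_mulVec, dotProduct_smul, smul_eq_mul, qf_vecMulVec]
  ring

lemma sum_dotProduct' (v : Fin m → ℝ) (F : Finset (Fin n)) (f : Fin n → Fin m → ℝ) :
    (∑ i ∈ F, f i) ⬝ᵥ v = ∑ i ∈ F, f i ⬝ᵥ v := by
  simp only [dotProduct, Finset.sum_apply, Finset.sum_mul]
  exact Finset.sum_comm

lemma scalar_center (F : Finset (Fin n)) (p x y : Fin n → ℝ)
    (hp : ∑ i ∈ F, p i = 1) (c e : ℝ) :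
    ∑ i ∈ F, p i * ((x i - c) * (y i - e))
      = (∑ i ∈ F, p i * ((x i - ∑ j ∈ F, p j * x j) * (y i - ∑ j ∈ F, p j * y j)))
        + ((∑ j ∈ F, p j * x j) - c) * ((∑ j ∈ F, p j * y j) - e) := by
  set mx := ∑ j ∈ F, p j * x j with hmx
  set my := ∑ j ∈ F, p j * y j with hmy
  have expand : ∀ c e : ℝ, ∑ i ∈ F, p i * ((x i - c) * (y i - e))
      = (∑ i ∈ F, p i * (x i * y i)) - e * mx - c * my + c * e := by
    intro c e
    have h : ∀ i ∈ F, p i * ((x i - c) * (y i - e))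
        = p i * (x i * y i) - e * (p i * x i) - c * (p i * y i) + (c * e) * p i :=
      fun i _ => by ring
    rw [Finset.sum_congr rfl h, Finset.sum_add_distrib, Finset.sum_sub_distrib,
      Finset.sum_sub_distrib, ← Finset.mul_sum, ← Finset.mul_sum, ← Finset.mul_sum, hp,
      ← hmx, ← hmy]
    ring
  rw [expand c e, expand mx my]
  ring

lemma matrix_center (F : Finset (Fin n)) (p : Fin n → ℝ) (hp : ∑ i ∈ F, p i = 1)
    (Y : Fin n → Fin m → ℝ) (v : Fin m → ℝ) :
    ∑ i ∈ F, p i • vecMulVec (Y i - v) (Y i - v)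
      = (∑ i ∈ F, p i •
          vecMulVec (Y i - ∑ j ∈ F, p j • Y j) (Y i - ∑ j ∈ F, p j • Y j))
        + vecMulVec ((∑ j ∈ F, p j • Y j) - v) ((∑ j ∈ F, p j • Y j) - v) := by
  ext a b
  simp only [Matrix.add_apply, Matrix.sum_apply, Matrix.smul_apply, vecMulVec_apply,
    Pi.sub_apply, Finset.sum_apply, Pi.smul_apply, smul_eq_mul]
  exact scalar_center F p (fun i => Y i a) (fun i => Y i b) hp (v a) (v b)

lemma qf_sandwich (B : Matrix (Fin m) (Fin p) ℝ) (P : Matrix (Fin m) (Fin m) ℝ)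
    (u : Fin p → ℝ) :
    u ⬝ᵥ ((Bᵀ * P * B) *ᵥ u) = (B *ᵥ u) ⬝ᵥ (P *ᵥ (B *ᵥ u)) := by
  rw [← Matrix.mulVec_mulVec, ← Matrix.mulVec_mulVec, Matrix.dotProduct_mulVec,
    Matrix.vecMul_transpose]

end SiftAux
theorem sift_scores_safe {d n : ℕ} (hn : 1 ≤ n) (X : Fin n → Fin d → ℝ)
    (α : ℝ) (hα : 0 < α) (hα' : α ≤ 1 / 2)
    (S : Finset (Fin n)) (hScard : (S.card : ℝ) = α * n)
    (μstar : Fin d → ℝ)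
    (hA : ((1 : Matrix (Fin d) (Fin d) ℝ) -
      (S.card : ℝ)⁻¹ • ∑ i ∈ S, Matrix.vecMulVec (X i - μstar) (X i - μstar)).PosSemidef)
    (w : Fin n → ℝ) (hsat : Saturated α S w)
    (hβ : 0 < wsum w Finset.univ) (hSpos : 0 < wsum w S)
    (k : ℕ) (hk : 4 / α ≤ (k : ℝ))
    (V : Matrix (Fin d) (Fin k) ℝ) (hV : Vᵀ * V = 1)
    (hSigPD : (Vᵀ * wcov X w Finset.univ * V).PosDef)
    (hSigMin : ((Vᵀ * wcov X w Finset.univ * V) -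
      (4 / Real.sqrt (wsum w Finset.univ)) • (1 : Matrix (Fin k) (Fin k) ℝ)).PosSemidef)
    (τ : Fin n → ℝ)
    (hτ : ∀ i, τ i = dotProduct (X i - wmean X w Finset.univ)
      ((V * (Vᵀ * wcov X w Finset.univ * V)⁻¹ * Vᵀ).mulVec (X i - wmean X w Finset.univ))) :
    (∑ i ∈ S, (w i / wsum w S) * τ i ≤ (k : ℝ) / 2) ∧
    (∑ i, (w i / wsum w Finset.univ) * τ i = (k : ℝ)) ∧
    Safe S w τ := by
  obtain ⟨hw0, hw1, hwn, hws⟩ := hsat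
  set β := wsum w Finset.univ with hβd
  set s := wsum w S with hsd
  set μ := wmean X w Finset.univ with hμd
  set Cov := wcov X w Finset.univ with hCovd
  set Sg := Vᵀ * Cov * V with hSgd
  set M := V * Sg⁻¹ * Vᵀ with hMd
  -- basic positivity facts
  have hn0 : (0:ℝ) < n := by exact_mod_cast hn
  have hsqβ : 0 < Real.sqrt β := Real.sqrt_pos.mpr hβ
  have hβ1 : β ≤ 1 := by rw [hβd]; exact hw1
  have hdet : IsUnit Sg.det := isUnit_iff_ne_zero.mpr hSigPD.det_pos.ne'
  have hppos : ∀ i, 0 ≤ w i / s := fun i => div_nonneg (hw0 i) hSpos.le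
  have hpsum : ∑ i ∈ S, w i / s = 1 := by
    rw [← Finset.sum_div]
    have hsum_s : ∑ i ∈ S, w i = s := hsd.symm
    rw [hsum_s]
    exact div_self hSpos.ne'
  -- weighted sums of scores as traces
  have hsum_trace : ∀ (F : Finset (Fin n)) (q : Fin n → ℝ),
      (M * ∑ i ∈ F, q i • vecMulVec (X i - μ) (X i - μ)).trace = ∑ i ∈ F, q i * τ i := by
    intro F q
    rw [Finset.mul_sum, Matrix.trace_sum]
    refine Finset.sum_congr rfl fun i _ => ?_
    rw [Matrix.mul_smul, Matrix.trace_smul, trace_mul_vecMulVec, hτ i, smul_eq_mul]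
  have hCov_eq : Cov = ∑ i ∈ Finset.univ, (w i / β) • vecMulVec (X i - μ) (X i - μ) := by
    rw [hCovd, hβd, hμd]; rfl
  -- Part 2
  have part2 : ∑ i, (w i / β) * τ i = (k:ℝ) := by
    have h := hsum_trace Finset.univ (fun i => w i / β)
    beta_reduce at h
    rw [← hCov_eq] at h
    rw [← h, hMd]
    calc (V * Sg⁻¹ * Vᵀ * Cov).trace
        = ((V * Sg⁻¹) * (Vᵀ * Cov)).trace := by rw [Matrix.mul_assoc (V * Sg⁻¹)]
      _ = ((Vᵀ * Cov) * (V * Sg⁻¹)).trace := Matrix.trace_mul_comm _ _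
      _ = ((Vᵀ * Cov * V) * Sg⁻¹).trace := by rw [← Matrix.mul_assoc]
      _ = (Sg * Sg⁻¹).trace := by rw [← hSgd]
      _ = ((1 : Matrix (Fin k) (Fin k) ℝ)).trace := by rw [Matrix.mul_nonsing_inv _ hdet]
      _ = (k:ℝ) := by simp [Matrix.trace_one]
  -- the weighted mean over S
  set mS : Fin d → ℝ := ∑ j ∈ S, (w j / s) • X j with hmS
  have hA_eq : ∑ i ∈ S, (w i / s) • vecMulVec (X i - μ) (X i - μ)
      = (∑ i ∈ S, (w i / s) • vecMulVec (X i - mS) (X i - mS))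
        + vecMulVec (mS - μ) (mS - μ) :=
    matrix_center S (fun i => w i / s) hpsum X μ
  have hB_eq : ∑ i ∈ S, (w i / s) • vecMulVec (X i - μstar) (X i - μstar)
      = (∑ i ∈ S, (w i / s) • vecMulVec (X i - mS) (X i - mS))
        + vecMulVec (mS - μstar) (mS - μstar) :=
    matrix_center S (fun i => w i / s) hpsum X μstar
  set Cmat : Matrix (Fin d) (Fin d) ℝ :=
    ∑ i ∈ S, (w i / s) • vecMulVec (X i - mS) (X i - mS) with hCmat
  -- step A : (1/√β) • 1 - Bstar is PSD
  have hBstar_psd : ((1/Real.sqrt β) • (1 : Matrix (Fin d) (Fin d) ℝ)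
      - ∑ i ∈ S, (w i / s) • vecMulVec (X i - μstar) (X i - μstar)).PosSemidef := by
    refine PosSemidef.of_dotProduct_mulVec_nonneg ?_ ?_
    · apply Matrix.IsHermitian.sub
      · show _ = _
        rw [conjTranspose_smul, conjTranspose_one]
        simp
      · exact herm_sum_smul_vecMulVec S _ (fun i => X i - μstar)
    · intro v
      rw [star_trivial, sub_mulVec, dotProduct_sub, smul_mulVec, one_mulVec,
        dotProduct_smul, smul_eq_mul, qf_sum]
      have hcard : (0:ℝ) < S.card := by rw [hScard]; exact mul_pos hα hn0
      have hSc : ∑ i ∈ S, ((X i - μstar) ⬝ᵥ v)^2 ≤ (S.card : ℝ) * (v ⬝ᵥ v) := by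
        have h := hA.dotProduct_mulVec_nonneg v
        rw [star_trivial, sub_mulVec, dotProduct_sub, one_mulVec, smul_mulVec,
          dotProduct_smul, smul_eq_mul, sum_mulVec', dotProduct_sum'] at h
        have hterm : ∀ i ∈ S, v ⬝ᵥ (vecMulVec (X i - μstar) (X i - μstar) *ᵥ v)
            = ((X i - μstar) ⬝ᵥ v)^2 := by
          intro i _; rw [qf_vecMulVec]; ring
        rw [Finset.sum_congr rfl hterm] at h
        have h2 : (S.card:ℝ)⁻¹ * ∑ i ∈ S, ((X i - μstar) ⬝ᵥ v)^2 ≤ v ⬝ᵥ v := by linarith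
        calc ∑ i ∈ S, ((X i - μstar) ⬝ᵥ v)^2
            = (S.card:ℝ) * ((S.card:ℝ)⁻¹ * ∑ i ∈ S, ((X i - μstar) ⬝ᵥ v)^2) := by
              field_simp
          _ ≤ (S.card:ℝ) * (v ⬝ᵥ v) := mul_le_mul_of_nonneg_left h2 hcard.le
      have hwbound : ∀ i ∈ S, (w i / s) * ((X i - μstar) ⬝ᵥ v)^2
          ≤ (1/((n:ℝ) * α * Real.sqrt β)) * ((X i - μstar) ⬝ᵥ v)^2 := by
        intro i _
        apply mul_le_mul_of_nonneg_right _ (sq_nonneg _)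
        have hαβ : 0 < α * Real.sqrt β := mul_pos hα hsqβ
        calc w i / s ≤ (1/(n:ℝ)) / (α * Real.sqrt β) :=
              div_le_div₀ (by positivity) (hwn i) hαβ hws
          _ = 1/((n:ℝ) * α * Real.sqrt β) := by rw [div_div, mul_assoc]
      have hsum1 : ∑ i ∈ S, (w i / s) * ((X i - μstar) ⬝ᵥ v)^2
          ≤ (1/((n:ℝ) * α * Real.sqrt β)) * ((S.card:ℝ) * (v ⬝ᵥ v)) := by
        calc ∑ i ∈ S, (w i / s) * ((X i - μstar) ⬝ᵥ v)^2
            ≤ ∑ i ∈ S, (1/((n:ℝ) * α * Real.sqrt β)) * ((X i - μstar) ⬝ᵥ v)^2 :=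
              Finset.sum_le_sum hwbound
          _ = (1/((n:ℝ) * α * Real.sqrt β)) * ∑ i ∈ S, ((X i - μstar) ⬝ᵥ v)^2 := by
              rw [Finset.mul_sum]
          _ ≤ (1/((n:ℝ) * α * Real.sqrt β)) * ((S.card:ℝ) * (v ⬝ᵥ v)) :=
              mul_le_mul_of_nonneg_left hSc (by positivity)
      have hfinal : (1/((n:ℝ) * α * Real.sqrt β)) * ((S.card:ℝ) * (v ⬝ᵥ v))
          = (1/Real.sqrt β) * (v ⬝ᵥ v) := by
        rw [hScard]
        field_simp
      linarith
  -- step B : (1/√β) • 1 - Cmat is PSD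
  have hC0 : ((1/Real.sqrt β) • (1 : Matrix (Fin d) (Fin d) ℝ) - Cmat).PosSemidef := by
    have heq : (1/Real.sqrt β) • (1 : Matrix (Fin d) (Fin d) ℝ) - Cmat
        = ((1/Real.sqrt β) • (1 : Matrix (Fin d) (Fin d) ℝ)
            - ∑ i ∈ S, (w i / s) • vecMulVec (X i - μstar) (X i - μstar))
          + vecMulVec (mS - μstar) (mS - μstar) := by
      rw [hB_eq, hCmat]; abel
    rw [heq]
    exact hBstar_psd.add (psd_vecMulVec _)
  -- step C : (1/4) • Sg - Vᵀ Cmat V is PSD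
  have hG_psd : ((1/4 : ℝ) • Sg - Vᵀ * Cmat * V).PosSemidef := by
    have hconj : Vᵀ * ((1/Real.sqrt β) • (1 : Matrix (Fin d) (Fin d) ℝ) - Cmat) * V
        = (1/Real.sqrt β) • (1 : Matrix (Fin k) (Fin k) ℝ) - Vᵀ * Cmat * V := by
      rw [Matrix.mul_sub, Matrix.sub_mul, Matrix.mul_smul, Matrix.mul_one, Matrix.smul_mul, hV]
    have h1 : (Vᵀ * ((1/Real.sqrt β) • (1 : Matrix (Fin d) (Fin d) ℝ) - Cmat) * V).PosSemidef := by
      have h := hC0.conjTranspose_mul_mul_same V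
      rwa [conjTranspose_eq_transpose_of_trivial] at h
    have h2 : ((1/4:ℝ) • Sg - (1/Real.sqrt β) • (1 : Matrix (Fin k) (Fin k) ℝ)).PosSemidef := by
      have h3 : (1/4:ℝ) • Sg - (1/Real.sqrt β) • (1 : Matrix (Fin k) (Fin k) ℝ)
          = (1/4:ℝ) • (Sg - (4/Real.sqrt β) • (1 : Matrix (Fin k) (Fin k) ℝ)) := by
        have hne : Real.sqrt β ≠ 0 := hsqβ.ne'
        rw [smul_sub, smul_smul]
        congr 1
        field_simp
      rw [h3]
      exact psd_smul hSigMin (by norm_num)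
    have h4 := h1.add h2
    rw [hconj] at h4
    have heq : ((1/Real.sqrt β) • (1 : Matrix (Fin k) (Fin k) ℝ) - Vᵀ * Cmat * V)
        + ((1/4:ℝ) • Sg - (1/Real.sqrt β) • (1 : Matrix (Fin k) (Fin k) ℝ))
        = (1/4 : ℝ) • Sg - Vᵀ * Cmat * V := by abel
    rwa [heq] at h4
  -- step D : trace bound
  have htraceG : (Sg⁻¹ * (Vᵀ * Cmat * V)).trace ≤ (k:ℝ)/4 := by
    have h0 : 0 ≤ (Sg⁻¹ * ((1/4:ℝ) • Sg - Vᵀ * Cmat * V)).trace :=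
      trace_mul_nonneg hSigPD.inv.posSemidef hG_psd
    rw [Matrix.mul_sub, Matrix.trace_sub, Matrix.mul_smul, Matrix.trace_smul,
      Matrix.nonsing_inv_mul _ hdet, Matrix.trace_one] at h0
    simp only [Fintype.card_fin, smul_eq_mul] at h0
    linarith
  -- step E : the mean-shift term
  set cvec : Fin k → ℝ := Vᵀ *ᵥ (mS - μ) with hcvec
  have hm : mS - μ = ∑ i ∈ S, (w i / s) • (X i - μ) := by
    funext a
    simp only [Pi.sub_apply, Finset.sum_apply, Pi.smul_apply, smul_eq_mul]
    rw [Finset.sum_congr rfl (fun i _ => mul_sub (w i / s) (X i a) (μ a)),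
      Finset.sum_sub_distrib, ← Finset.sum_mul, hpsum, one_mul]
    congr 1
    rw [hmS]
    simp [Finset.sum_apply]
  have key : ∀ u : Fin k → ℝ, (cvec ⬝ᵥ u)^2 ≤ (β/s) * (u ⬝ᵥ (Sg *ᵥ u)) := by
    intro u
    have hcu : cvec ⬝ᵥ u = (mS - μ) ⬝ᵥ (V *ᵥ u) := by
      rw [hcvec, Matrix.mulVec_transpose, ← Matrix.dotProduct_mulVec]
    have hmg : (mS - μ) ⬝ᵥ (V *ᵥ u) = ∑ i ∈ S, (w i / s) * ((X i - μ) ⬝ᵥ (V *ᵥ u)) := by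
      rw [hm, sum_dotProduct']
      exact Finset.sum_congr rfl fun i _ => smul_dotProduct _ _ _
    have hCS : (∑ i ∈ S, (w i / s) * ((X i - μ) ⬝ᵥ (V *ᵥ u)))^2
        ≤ ∑ i ∈ S, (w i / s) * ((X i - μ) ⬝ᵥ (V *ᵥ u))^2 := by
      have h := Finset.sum_mul_sq_le_sq_mul_sq S (fun i => Real.sqrt (w i / s))
        (fun i => Real.sqrt (w i / s) * ((X i - μ) ⬝ᵥ (V *ᵥ u)))
      have e1 : ∀ i ∈ S, Real.sqrt (w i / s) * (Real.sqrt (w i / s) * ((X i - μ) ⬝ᵥ (V *ᵥ u)))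
          = (w i / s) * ((X i - μ) ⬝ᵥ (V *ᵥ u)) := by
        intro i _; rw [← mul_assoc, Real.mul_self_sqrt (hppos i)]
      have e2 : ∀ i ∈ S, Real.sqrt (w i / s)^2 = w i / s := fun i _ => Real.sq_sqrt (hppos i)
      have e3 : ∀ i ∈ S, (Real.sqrt (w i / s) * ((X i - μ) ⬝ᵥ (V *ᵥ u)))^2
          = (w i / s) * ((X i - μ) ⬝ᵥ (V *ᵥ u))^2 := by
        intro i _; rw [mul_pow, Real.sq_sqrt (hppos i)]
      rw [Finset.sum_congr rfl e1, Finset.sum_congr rfl e2, Finset.sum_congr rfl e3,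
        hpsum, one_mul] at h
      exact h
    have hq : u ⬝ᵥ (Sg *ᵥ u) = ∑ i ∈ Finset.univ, (w i / β) * ((X i - μ) ⬝ᵥ (V *ᵥ u))^2 := by
      rw [hSgd, qf_sandwich, hCov_eq, qf_sum]
    have hext : ∑ i ∈ S, (w i / s) * ((X i - μ) ⬝ᵥ (V *ᵥ u))^2
        ≤ (β/s) * (u ⬝ᵥ (Sg *ᵥ u)) := by
      have step1 : ∀ i ∈ S, (w i / s) * ((X i - μ) ⬝ᵥ (V *ᵥ u))^2
          = (β/s) * ((w i / β) * ((X i - μ) ⬝ᵥ (V *ᵥ u))^2) := by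
        intro i _
        field_simp
      rw [Finset.sum_congr rfl step1, ← Finset.mul_sum, hq]
      apply mul_le_mul_of_nonneg_left _ (by positivity)
      apply Finset.sum_le_sum_of_subset_of_nonneg (Finset.subset_univ S)
      intro i _ _
      exact mul_nonneg (div_nonneg (hw0 i) hβ.le) (sq_nonneg _)
    calc (cvec ⬝ᵥ u)^2 = (∑ i ∈ S, (w i / s) * ((X i - μ) ⬝ᵥ (V *ᵥ u)))^2 := by
          rw [hcu, hmg]
      _ ≤ ∑ i ∈ S, (w i / s) * ((X i - μ) ⬝ᵥ (V *ᵥ u))^2 := hCS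
      _ ≤ (β/s) * (u ⬝ᵥ (Sg *ᵥ u)) := hext
  have hSgInvc : Sg *ᵥ (Sg⁻¹ *ᵥ cvec) = cvec := by
    rw [Matrix.mulVec_mulVec, Matrix.mul_nonsing_inv _ hdet, Matrix.one_mulVec]
  have ht0 : 0 ≤ cvec ⬝ᵥ (Sg⁻¹ *ᵥ cvec) := by
    have h := hSigPD.inv.posSemidef.dotProduct_mulVec_nonneg cvec
    rwa [star_trivial] at h
  have hcbound : cvec ⬝ᵥ (Sg⁻¹ *ᵥ cvec) ≤ β / s := by
    have hkey := key (Sg⁻¹ *ᵥ cvec)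
    rw [hSgInvc, dotProduct_comm (Sg⁻¹ *ᵥ cvec) cvec] at hkey
    rcases ht0.eq_or_lt with h0 | h0
    · rw [← h0]; positivity
    · rw [pow_two] at hkey
      exact (mul_le_mul_iff_of_pos_right h0).mp hkey
  have hβs : β / s ≤ (k:ℝ)/4 := by
    have hαβ : 0 < α * Real.sqrt β := mul_pos hα hsqβ
    have h1 : β / s ≤ β / (α * Real.sqrt β) := by
      rw [div_le_div_iff₀ hSpos hαβ]
      exact mul_le_mul_of_nonneg_left hws hβ.le
    have hss : Real.sqrt β * Real.sqrt β = β := Real.mul_self_sqrt hβ.le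
    have h2 : β / (α * Real.sqrt β) = Real.sqrt β / α := by
      rw [div_eq_div_iff hαβ.ne' hα.ne']
      linear_combination (-α) * hss
    have h3 : Real.sqrt β / α ≤ 1 / α := by
      gcongr
      exact Real.sqrt_le_one.mpr hβ1
    have h4 : 1 / α ≤ (k:ℝ)/4 := by
      have h5 : 4 ≤ (k:ℝ) * α := (div_le_iff₀ hα).mp hk
      rw [div_le_div_iff₀ hα (by norm_num : (0:ℝ) < 4)]
      linarith
    linarith
  -- assembling part 1
  have hMsplit : ∑ i ∈ S, (w i / s) * τ i
      = (Sg⁻¹ * (Vᵀ * Cmat * V)).trace + cvec ⬝ᵥ (Sg⁻¹ *ᵥ cvec) := by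
    have h := hsum_trace S (fun i => w i / s)
    beta_reduce at h
    rw [hA_eq] at h
    rw [← h, Matrix.mul_add, Matrix.trace_add]
    congr 1
    · rw [hMd]
      calc (V * Sg⁻¹ * Vᵀ * Cmat).trace
          = ((V * Sg⁻¹) * (Vᵀ * Cmat)).trace := by rw [Matrix.mul_assoc (V * Sg⁻¹)]
        _ = ((Vᵀ * Cmat) * (V * Sg⁻¹)).trace := Matrix.trace_mul_comm _ _
        _ = ((Vᵀ * Cmat * V) * Sg⁻¹).trace := by rw [← Matrix.mul_assoc]
        _ = (Sg⁻¹ * (Vᵀ * Cmat * V)).trace := Matrix.trace_mul_comm _ _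
    · rw [trace_mul_vecMulVec, hMd]
      have h6 := qf_sandwich Vᵀ Sg⁻¹ (mS - μ)
      rw [transpose_transpose] at h6
      rw [h6, hcvec]
  have part1 : ∑ i ∈ S, (w i / s) * τ i ≤ (k:ℝ)/2 := by
    rw [hMsplit]
    linarith
  refine ⟨part1, part2, ?_⟩
  show ∑ i ∈ S, (w i / s) * τ i ≤ (1 / 2) * ∑ i, (w i / β) * τ i
  rw [part2]
  linarith
end

section
/- Suppose assumption (A) holds and w ∈ ℝ^n is saturated with β := ‖w_T‖₁ > 0. Let P ∈ ℝ^{d×d} be a symmetric matrix with P² = P (an orthogonal projection), and suppose that ‖(I − P)·Cov_w(T)·(I − P)‖_op ≤ c/√β for some c ≥ 0, where ‖·‖_op is the spectral norm. Then ‖(I − P)·(μ_w(T) − μ*)‖₂² ≤ (2c + 2)/α. -/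
open Finset

/-- The spectral (ℓ₂ operator) norm of a matrix. -/
noncomputable def opNorm {d : ℕ} (A : Matrix (Fin d) (Fin d) ℝ) : ℝ :=
  ‖Matrix.toEuclideanCLM (𝕜 := ℝ) A‖

open scoped Matrix

lemma quad_vecMulVec {d : ℕ} (a v : Fin d → ℝ) :
    v ⬝ᵥ (Matrix.vecMulVec a a).mulVec v = (a ⬝ᵥ v) ^ 2 := by
  simp only [Matrix.mulVec, Matrix.vecMulVec_apply, dotProduct, sq,
    Finset.mul_sum, Finset.sum_mul]
  rw [Finset.sum_comm]
  congr 1; ext i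
  congr 1; ext j; ring

lemma quad_le_opNorm {d : ℕ} (A : Matrix (Fin d) (Fin d) ℝ) (v : Fin d → ℝ) :
    v ⬝ᵥ A.mulVec v ≤ opNorm A * (v ⬝ᵥ v) := by
  set x : EuclideanSpace ℝ (Fin d) := (WithLp.equiv 2 _).symm v with hx
  have h1 : v ⬝ᵥ A.mulVec v = inner ℝ x ((Matrix.toEuclideanCLM (𝕜 := ℝ) A) x) := by
    rw [hx, WithLp.equiv_symm_apply, Matrix.toEuclideanCLM_toLp]
    simp [PiLp.inner_apply, Matrix.toLin'_apply,
      Matrix.mulVec, dotProduct, mul_comm]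
  have h2 : inner ℝ x ((Matrix.toEuclideanCLM (𝕜 := ℝ) A) x)
      ≤ ‖x‖ * ‖(Matrix.toEuclideanCLM (𝕜 := ℝ) A) x‖ := real_inner_le_norm _ _
  have h3 : ‖(Matrix.toEuclideanCLM (𝕜 := ℝ) A) x‖ ≤ opNorm A * ‖x‖ :=
    ContinuousLinearMap.le_opNorm _ _
  have h4 : v ⬝ᵥ v = ‖x‖ ^ 2 := by
    rw [EuclideanSpace.norm_eq, Real.sq_sqrt (by positivity)]
    simp [hx, WithLp.equiv_symm_apply, dotProduct, sq]
  rw [h1, h4]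
  calc inner ℝ x ((Matrix.toEuclideanCLM (𝕜 := ℝ) A) x)
      ≤ ‖x‖ * ‖(Matrix.toEuclideanCLM (𝕜 := ℝ) A) x‖ := h2
    _ ≤ ‖x‖ * (opNorm A * ‖x‖) := mul_le_mul_of_nonneg_left h3 (norm_nonneg x)
    _ = opNorm A * ‖x‖ ^ 2 := by ring

lemma quad_sum {d : ℕ} {ι : Type*} [DecidableEq ι] (T : Finset ι) (cf : ι → ℝ)
    (y : ι → Fin d → ℝ) (v : Fin d → ℝ) :
    v ⬝ᵥ ((∑ i ∈ T, cf i • Matrix.vecMulVec (y i) (y i)) *ᵥ v) =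
      ∑ i ∈ T, cf i * (y i ⬝ᵥ v) ^ 2 := by
  induction T using Finset.induction_on with
  | empty => simp
  | insert _ _ h ih =>
      rw [Finset.sum_insert h, Finset.sum_insert h, Matrix.add_mulVec, dotProduct_add,
        ih, Matrix.smul_mulVec, dotProduct_smul, quad_vecMulVec, smul_eq_mul]

theorem learn_mean_off_projection {d n : ℕ} (hn : 1 ≤ n) (X : Fin n → Fin d → ℝ)
    (α : ℝ) (hα : 0 < α) (hα' : α ≤ 1 / 2)
    (S : Finset (Fin n)) (hScard : (S.card : ℝ) = α * n)
    (μstar : Fin d → ℝ)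
    (hA : ((1 : Matrix (Fin d) (Fin d) ℝ) -
      (S.card : ℝ)⁻¹ • ∑ i ∈ S, Matrix.vecMulVec (X i - μstar) (X i - μstar)).PosSemidef)
    (w : Fin n → ℝ) (hsat : Saturated α S w) (hβ : 0 < wsum w Finset.univ)
    (P : Matrix (Fin d) (Fin d) ℝ) (hPsymm : P.IsHermitian) (hPidem : P * P = P)
    (c : ℝ) (hc : 0 ≤ c)
    (hop : opNorm (((1 : Matrix (Fin d) (Fin d) ℝ) - P) * wcov X w Finset.univ *
      ((1 : Matrix (Fin d) (Fin d) ℝ) - P)) ≤ c / Real.sqrt (wsum w Finset.univ)) :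
    ∑ l, (((1 : Matrix (Fin d) (Fin d) ℝ) - P).mulVec
        (wmean X w Finset.univ - μstar) l) ^ 2 ≤ (2 * c + 2) / α := by
  obtain ⟨hw0, hw1, hwn, hws⟩ := hsat
  have hn0 : (0 : ℝ) < n := by exact_mod_cast hn
  set β := wsum w Finset.univ with hβdef
  set s := Real.sqrt β with hsdef
  have hs0 : 0 < s := Real.sqrt_pos.mpr hβ
  have hss : s * s = β := Real.mul_self_sqrt hβ.le
  have hwSβ : wsum w S ≤ β := by
    rw [hβdef]
    exact Finset.sum_le_sum_of_subset_of_nonneg (Finset.subset_univ S) fun i _ _ => hw0 i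
  have hαs : α ≤ s := by nlinarith [le_trans hws hwSβ]
  set Q : Matrix (Fin d) (Fin d) ℝ := 1 - P with hQdef
  have hQT : Qᵀ = Q := by
    have hPT : Pᵀ = P := by
      rw [← Matrix.conjTranspose_eq_transpose_of_trivial]; exact hPsymm
    rw [hQdef, Matrix.transpose_sub, Matrix.transpose_one, hPT]
  have hQQ : Q * Q = Q := by
    have h : (1 - P) * (1 - P) = 1 - P - P + P * P := by noncomm_ring
    rw [hQdef, h, hPidem]; abel
  set m : Fin d → ℝ := wmean X w Finset.univ - μstar with hmdef
  set v : Fin d → ℝ := Q *ᵥ m with hvdef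
  have hQv : Q *ᵥ v = v := by rw [hvdef, Matrix.mulVec_mulVec, hQQ]
  have hvQ : ∀ z, v ⬝ᵥ (Q *ᵥ z) = v ⬝ᵥ z := by
    intro z
    rw [Matrix.dotProduct_mulVec]
    congr 1
    conv_lhs => rw [← hQT]
    rw [Matrix.vecMul_transpose, hQv]
  have hmv : m ⬝ᵥ v = v ⬝ᵥ v := by
    conv_lhs => rw [← hQv, Matrix.dotProduct_mulVec, ← hQT, Matrix.vecMul_transpose, ← hvdef]
  set t2 := v ⬝ᵥ v with ht2def
  have ht2 : 0 ≤ t2 := by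
    rw [ht2def, dotProduct]
    exact Finset.sum_nonneg fun i _ => mul_self_nonneg _
  have hgoal : ∑ l, (Q *ᵥ m) l ^ 2 = t2 := by
    rw [← hvdef, ht2def, dotProduct]
    exact Finset.sum_congr rfl fun l _ => sq (v l) ▸ rfl
  rw [hgoal]
  clear_value t2 v m Q s β
  -- Step A : consequence of assumption (A)
  have hcard0 : 0 < (S.card : ℝ) := by rw [hScard]; positivity
  have hA2 := hA.dotProduct_mulVec_nonneg v
  rw [star_trivial, Matrix.sub_mulVec, dotProduct_sub, Matrix.one_mulVec,
    Finset.smul_sum] at hA2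
  rw [quad_sum S (fun _ => (S.card : ℝ)⁻¹) (fun i => X i - μstar) v] at hA2
  rw [← Finset.mul_sum] at hA2
  have hAineq : ∑ i ∈ S, ((X i - μstar) ⬝ᵥ v) ^ 2 ≤ (S.card : ℝ) * t2 := by
    have h1 : (S.card : ℝ)⁻¹ * ∑ i ∈ S, ((X i - μstar) ⬝ᵥ v) ^ 2 ≤ t2 := by
      rw [ht2def]; linarith
    have h2 := mul_le_mul_of_nonneg_left h1 hcard0.le
    rwa [← mul_assoc, mul_inv_cancel₀ (ne_of_gt hcard0), one_mul] at h2
  have haS : ∑ i ∈ S, w i * ((X i - μstar) ⬝ᵥ v) ^ 2 ≤ α * t2 := by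
    calc ∑ i ∈ S, w i * ((X i - μstar) ⬝ᵥ v) ^ 2
        ≤ ∑ i ∈ S, (1 / n) * ((X i - μstar) ⬝ᵥ v) ^ 2 :=
          Finset.sum_le_sum fun i _ => mul_le_mul_of_nonneg_right (hwn i) (sq_nonneg _)
      _ = (1 / n) * ∑ i ∈ S, ((X i - μstar) ⬝ᵥ v) ^ 2 := by rw [Finset.mul_sum]
      _ ≤ (1 / n) * ((S.card : ℝ) * t2) := by
          apply mul_le_mul_of_nonneg_left hAineq; positivity
      _ = α * t2 := by rw [hScard]; field_simp
  -- quadratic form of the covariance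
  have hcovq : v ⬝ᵥ (wcov X w Finset.univ *ᵥ v) =
      ∑ i, (w i / β) * ((X i - μstar) ⬝ᵥ v - t2) ^ 2 := by
    rw [wcov, ← hβdef, quad_sum Finset.univ (fun i => w i / β)
      (fun i => X i - wmean X w Finset.univ) v]
    refine Finset.sum_congr rfl fun i _ => ?_
    congr 2
    have hx : X i - wmean X w Finset.univ = (X i - μstar) - m := by rw [hmdef]; abel
    rw [hx, sub_dotProduct, hmv, ht2def]
  -- upper bound via operator norm
  have hQCQ : v ⬝ᵥ ((Q * wcov X w Finset.univ * Q) *ᵥ v) =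
      v ⬝ᵥ (wcov X w Finset.univ *ᵥ v) := by
    rw [← Matrix.mulVec_mulVec, hQv, ← Matrix.mulVec_mulVec, hvQ]
  have hup : ∑ i, (w i / β) * ((X i - μstar) ⬝ᵥ v - t2) ^ 2 ≤ c / s * t2 := by
    rw [← hcovq, ← hQCQ]
    refine le_trans (quad_le_opNorm _ _) ?_
    rw [← ht2def]
    exact mul_le_mul_of_nonneg_right hop ht2
  -- lower bound on the covariance quadratic form
  have hlow : wsum w S / β * (t2 ^ 2 / 2) - (∑ i ∈ S, w i * ((X i - μstar) ⬝ᵥ v) ^ 2) / β ≤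
      ∑ i, (w i / β) * ((X i - μstar) ⬝ᵥ v - t2) ^ 2 := by
    have h1 : ∑ i ∈ S, (w i / β) * ((X i - μstar) ⬝ᵥ v - t2) ^ 2 ≤
        ∑ i, (w i / β) * ((X i - μstar) ⬝ᵥ v - t2) ^ 2 := by
      refine Finset.sum_le_sum_of_subset_of_nonneg (Finset.subset_univ S) fun i _ _ => ?_
      have := hw0 i
      positivity
    have h2 : ∑ i ∈ S, (w i / β) * (t2 ^ 2 / 2 - ((X i - μstar) ⬝ᵥ v) ^ 2) ≤
        ∑ i ∈ S, (w i / β) * ((X i - μstar) ⬝ᵥ v - t2) ^ 2 := by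
      refine Finset.sum_le_sum fun i _ => ?_
      have hwi : 0 ≤ w i / β := div_nonneg (hw0 i) hβ.le
      refine mul_le_mul_of_nonneg_left ?_ hwi
      nlinarith [sq_nonneg (2 * ((X i - μstar) ⬝ᵥ v) - t2)]
    have h3 : ∑ i ∈ S, (w i / β) * (t2 ^ 2 / 2 - ((X i - μstar) ⬝ᵥ v) ^ 2) =
        wsum w S / β * (t2 ^ 2 / 2) - (∑ i ∈ S, w i * ((X i - μstar) ⬝ᵥ v) ^ 2) / β := by
      simp only [mul_sub]
      rw [Finset.sum_sub_distrib]
      congr 1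
      · rw [← Finset.sum_mul, ← Finset.sum_div, wsum]
      · rw [Finset.sum_div]
        exact Finset.sum_congr rfl fun i _ => by ring
    linarith [h1, h2, h3 ▸ h2]
  -- assemble
  have hmain : α * s / β * (t2 ^ 2 / 2) - α * t2 / β ≤ c / s * t2 := by
    have e1 : α * s / β * (t2 ^ 2 / 2) ≤ wsum w S / β * (t2 ^ 2 / 2) :=
      mul_le_mul_of_nonneg_right ((div_le_div_iff_of_pos_right hβ).mpr hws)
        (by positivity : (0:ℝ) ≤ t2 ^ 2 / 2)
    have e2 : (∑ i ∈ S, w i * ((X i - μstar) ⬝ᵥ v) ^ 2) / β ≤ α * t2 / β :=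
      (div_le_div_iff_of_pos_right hβ).mpr haS
    linarith [hlow, hup]
  rw [← hss] at hmain
  have hsne : s ≠ 0 := ne_of_gt hs0
  have hm3 : α * s * (t2 ^ 2 / 2) - α * t2 ≤ c * s * t2 := by
    have h := mul_le_mul_of_nonneg_right hmain (mul_pos hs0 hs0).le
    calc α * s * (t2 ^ 2 / 2) - α * t2
        = (α * s / (s * s) * (t2 ^ 2 / 2) - α * t2 / (s * s)) * (s * s) := by
          field_simp
      _ ≤ (c / s * t2) * (s * s) := h
      _ = c * s * t2 := by field_simp
  rw [le_div_iff₀ hα]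
  rcases eq_or_lt_of_le ht2 with h0 | h0
  · rw [← h0]; simp; linarith
  · have hαt : α * t2 ≤ s * t2 := mul_le_mul_of_nonneg_right hαs ht2
    have h5 : s * t2 * (t2 * α) ≤ s * t2 * (2 * c + 2) := by
      have hsq : s * t2 * (t2 * α) = 2 * (α * s * (t2 ^ 2 / 2)) := by ring
      have hrhs : s * t2 * (2 * c + 2) = 2 * (c * s * t2) + 2 * (s * t2) := by ring
      rw [hsq, hrhs]
      linarith [hm3, hαt]
    exact le_of_mul_le_mul_left h5 (mul_pos hs0 h0)
end
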